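/- Let P, P̂ be n×r matrices with orthonormal columns satisfying dist(P̂,P) + √(|M|μr/n) < 1 for a subset M ⊆ [n], where P is μ-incoherent (each row of P has squared norm at most μr/n). Then the matrix I_M^⊤(I − P̂P̂^⊤)I_M is invertible and ‖(I_M^⊤(I − P̂P̂^⊤)I_M)^{−1}‖ ≤ 1 / (1 − (dist(P̂,P) + √(|M|μr/n))²). -/

import Mathlib

open Matrix BigOperators

noncomputable def specNorm {m n : Type*} [Fintype m] [Fintype n] [DecidableEq n]
    (A : Matrix m n ℝ) : ℝ :=
  ‖LinearMap.toContinuousLinearMap (Matrix.toEuclideanLin A)‖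

noncomputable def distP {n r : ℕ} (Q P : Matrix (Fin n) (Fin r) ℝ) : ℝ :=
  specNorm ((1 - Q * Qᵀ) * P)

def selMat {n : ℕ} (M : Finset (Fin n)) : Matrix (Fin n) {i // i ∈ M} ℝ :=
  fun i j => if (j : Fin n) = i then 1 else 0

noncomputable def enorm {n : ℕ} (v : Fin n → ℝ) : ℝ :=
  Real.sqrt (∑ i, v i ^ 2)

noncomputable def smin {m n : Type*} [Fintype m] [Fintype n] [DecidableEq m] [DecidableEq n]
    (A : Matrix m n ℝ) : ℝ :=
  Real.sqrt (⨅ i, (Matrix.isHermitian_conjTranspose_mul_self A).eigenvalues i)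

noncomputable def lamMax {m : Type*} [Fintype m] [DecidableEq m]
    {A : Matrix m m ℝ} (hA : A.IsHermitian) : ℝ :=
  ⨆ i, hA.eigenvalues i

noncomputable def lamMin {m : Type*} [Fintype m] [DecidableEq m]
    {A : Matrix m m ℝ} (hA : A.IsHermitian) : ℝ :=
  ⨅ i, hA.eigenvalues i

noncomputable def eigDesc {n : ℕ} {A : Matrix (Fin n) (Fin n) ℝ} (hA : A.IsHermitian)
    (k : ℕ) : ℝ :=
  ((List.ofFn hA.eigenvalues).mergeSort (fun a b => decide (b ≤ a))).getD k 0

/-!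
Put `ε = dist(P̂, P) + √(|M| μ r / n)` and `G = I_Mᵀ P̂`, so that the Gram matrix is `1 - G Gᵀ`.
Splitting `P̂ = P Pᵀ P̂ + (1 - P Pᵀ) P̂` bounds `‖G‖` by `‖I_Mᵀ P‖ + ‖(1 - P Pᵀ) P̂‖`. The first
term is at most `√(|M| μ r / n)` by incoherence, row by row. The second equals `dist(P̂, P)`:
`(1 - P Pᵀ) P̂` and `(1 - P̂ P̂ᵀ) P` have Gram matrices `1 - Wᵀ W` and `1 - W Wᵀ` for the square
matrix `W = Pᵀ P̂`, and these have the same spectrum. Hence `‖G Gᵀ‖ ≤ ε² < 1`, and the Neumann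
series inverts `1 - G Gᵀ` with `‖(1 - G Gᵀ)⁻¹‖ ≤ 1 / (1 - ε²)`.
-/

open scoped Matrix.Norms.L2Operator

lemma IsSelfAdjoint.norm_eq_of_spectrum_eq {A : Type*} [NormedRing A] [StarRing A]
    [NormedAlgebra ℝ A] [IsometricContinuousFunctionalCalculus ℝ A IsSelfAdjoint] {a b : A}
    (ha : IsSelfAdjoint a) (hb : IsSelfAdjoint b) (h : spectrum ℝ a = spectrum ℝ b) :
    ‖a‖ = ‖b‖ := by
  have norm_le_iff (x : A) (hx : IsSelfAdjoint x) (c : ℝ) (hc : 0 ≤ c) :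
      ‖x‖ ≤ c ↔ ∀ t ∈ spectrum ℝ x, ‖t‖ ≤ c := by
    have h := norm_cfc_le_iff (id : ℝ → ℝ) x hc continuousOn_id hx
    rwa [cfc_id ℝ x hx] at h
  exact le_antisymm
    ((norm_le_iff a ha _ (norm_nonneg b)).2 (h ▸ (norm_le_iff b hb _ (norm_nonneg b)).1 le_rfl))
    ((norm_le_iff b hb _ (norm_nonneg a)).2 (h ▸ (norm_le_iff a ha _ (norm_nonneg a)).1 le_rfl))

lemma norm_ringInverse_one_sub_le {R : Type*} [NormedRing R] [HasSummableGeomSeries R] {x : R}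
    (h1 : ‖(1 : R)‖ ≤ 1) (hx : ‖x‖ < 1) : ‖Ring.inverse (1 - x)‖ ≤ (1 - ‖x‖)⁻¹ := by
  rw [← geom_series_eq_inverse x hx]
  linarith [tsum_geometric_le_of_norm_lt_one x hx]

namespace Matrix

section L2OpNorm

variable {m n : Type*} [Fintype m] [Fintype n] [DecidableEq n]

lemma l2_opNorm_one_le : ‖(1 : Matrix n n ℝ)‖ ≤ 1 := by
  nontriviality Matrix n n ℝ
  exact norm_one.le

lemma l2_opNorm_transpose [DecidableEq m] (A : Matrix m n ℝ) : ‖Aᵀ‖ = ‖A‖ := by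
  rw [← conjTranspose_eq_transpose_of_trivial, l2_opNorm_conjTranspose]

lemma l2_opNorm_transpose_mul_self (A : Matrix m n ℝ) : ‖Aᵀ * A‖ = ‖A‖ * ‖A‖ := by
  rw [← conjTranspose_eq_transpose_of_trivial, l2_opNorm_conjTranspose_mul_self]

lemma l2_opNorm_mul_transpose_self [DecidableEq m] (A : Matrix m n ℝ) :
    ‖A * Aᵀ‖ = ‖A‖ * ‖A‖ := by
  simpa [l2_opNorm_transpose] using l2_opNorm_transpose_mul_self Aᵀ

lemma l2_opNorm_le_one_of_transpose_mul_self_eq_one {A : Matrix m n ℝ}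
    (hA : Aᵀ * A = 1) : ‖A‖ ≤ 1 := by
  have h : ‖A‖ * ‖A‖ ≤ 1 := by
    rw [← l2_opNorm_transpose_mul_self, hA]
    exact l2_opNorm_one_le
  nlinarith [norm_nonneg A]

lemma l2_opNorm_le_sqrt_card_mul_of_sum_sq_row_le (A : Matrix m n ℝ) {c : ℝ}
    (hc : ∀ i, ∑ j, A i j ^ 2 ≤ c) : ‖A‖ ≤ √(Fintype.card m * c) := by
  rw [l2_opNorm_def]
  refine ContinuousLinearMap.opNorm_le_bound _ (Real.sqrt_nonneg _) fun x ↦ ?_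
  have hrow (i : m) : (A *ᵥ WithLp.ofLp x) i ^ 2 ≤ c * ‖x‖ ^ 2 := by
    rw [EuclideanSpace.real_norm_sq_eq]
    calc (A *ᵥ WithLp.ofLp x) i ^ 2 ≤ (∑ j, A i j ^ 2) * ∑ j, x j ^ 2 :=
          Finset.sum_mul_sq_le_sq_mul_sq _ _ _
      _ ≤ c * ∑ j, x j ^ 2 := by gcongr; exact hc i
  have hcard : 0 ≤ Fintype.card m * c := by
    cases isEmpty_or_nonempty m with
    | inl _ => simp
    | inr h =>
      obtain ⟨i⟩ := h
      exact mul_nonneg (Nat.cast_nonneg _) ((by positivity : (0 : ℝ) ≤ _).trans (hc i))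
  refine (sq_le_sq₀ (norm_nonneg _) (by positivity)).mp ?_
  rw [mul_pow, Real.sq_sqrt hcard, EuclideanSpace.real_norm_sq_eq]
  calc _ = ∑ i, (A *ᵥ WithLp.ofLp x) i ^ 2 := rfl
    _ ≤ ∑ _i : m, c * ‖x‖ ^ 2 := Finset.sum_le_sum fun i _ ↦ hrow i
    _ = Fintype.card m * c * ‖x‖ ^ 2 := by simp [mul_assoc]

lemma isUnit_one_sub_and_l2_opNorm_inv_le {X : Matrix n n ℝ} (hX : ‖X‖ < 1) :
    IsUnit (1 - X) ∧ ‖(1 - X)⁻¹‖ ≤ (1 - ‖X‖)⁻¹ :=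
  ⟨isUnit_one_sub_of_norm_lt_one hX,
    nonsing_inv_eq_ringInverse (1 - X) ▸ norm_ringInverse_one_sub_le l2_opNorm_one_le hX⟩

lemma spectrum_mul_comm {K : Type*} [Field K] (A B : Matrix n n K) :
    spectrum K (A * B) = spectrum K (B * A) := by
  ext t
  simp only [mem_spectrum_iff_isRoot_charpoly, charpoly_mul_comm]

lemma l2_opNorm_one_sub_transpose_mul_self_comm (W : Matrix n n ℝ) :
    ‖1 - Wᵀ * W‖ = ‖1 - W * Wᵀ‖ := by
  have hsa (V : Matrix n n ℝ) : IsSelfAdjoint (1 - Vᵀ * V) := by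
    simpa [star_eq_conjTranspose] using (IsSelfAdjoint.one _).sub (IsSelfAdjoint.star_mul_self V)
  refine IsSelfAdjoint.norm_eq_of_spectrum_eq (hsa W) (by simpa using hsa Wᵀ) ?_
  rw [← map_one (algebraMap ℝ (Matrix n n ℝ)), ← spectrum.singleton_sub_eq,
    ← spectrum.singleton_sub_eq, spectrum_mul_comm]

end L2OpNorm

section OrthonormalColumns

variable {l m r : Type*} [Fintype l] [Fintype m] [Fintype r] [DecidableEq m] [DecidableEq r]

lemma transpose_mul_self_one_sub_mul_transpose_mul {R : Type*} [CommRing R] {P Q : Matrix m r R}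
    (hP : Pᵀ * P = 1) (hQ : Qᵀ * Q = 1) :
    ((1 - P * Pᵀ) * Q)ᵀ * ((1 - P * Pᵀ) * Q) = 1 - (Pᵀ * Q)ᵀ * (Pᵀ * Q) := by
  have hidem : (1 - P * Pᵀ) * (1 - P * Pᵀ) = 1 - P * Pᵀ := by
    rw [sub_mul, one_mul, mul_sub, mul_one, Matrix.mul_assoc, ← Matrix.mul_assoc Pᵀ, hP,
      Matrix.one_mul, sub_self, sub_zero]
  rw [transpose_mul, transpose_sub, transpose_one, transpose_mul, transpose_transpose,
    Matrix.mul_assoc, ← Matrix.mul_assoc (1 - P * Pᵀ), hidem, Matrix.sub_mul, Matrix.one_mul,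
    Matrix.mul_sub, hQ, transpose_mul, transpose_transpose, Matrix.mul_assoc, Matrix.mul_assoc]

lemma l2_opNorm_one_sub_mul_transpose_mul_comm {P Q : Matrix m r ℝ} (hP : Pᵀ * P = 1)
    (hQ : Qᵀ * Q = 1) : ‖(1 - P * Pᵀ) * Q‖ = ‖(1 - Q * Qᵀ) * P‖ := by
  rw [← mul_self_inj (norm_nonneg _) (norm_nonneg _), ← l2_opNorm_transpose_mul_self,
    ← l2_opNorm_transpose_mul_self, transpose_mul_self_one_sub_mul_transpose_mul hP hQ,
    transpose_mul_self_one_sub_mul_transpose_mul hQ hP, l2_opNorm_one_sub_transpose_mul_self_comm,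
    transpose_mul Pᵀ, transpose_mul Qᵀ, transpose_transpose, transpose_transpose]

lemma l2_opNorm_mul_le_add_of_transpose_mul_self_eq_one (B : Matrix l m ℝ) {P Q : Matrix m r ℝ}
    (hP : Pᵀ * P = 1) (hQ : Qᵀ * Q = 1) :
    ‖B * Q‖ ≤ ‖B * P‖ + ‖B‖ * ‖(1 - P * Pᵀ) * Q‖ := by
  have hPQ : ‖Pᵀ * Q‖ ≤ 1 := by
    calc ‖Pᵀ * Q‖ ≤ ‖Pᵀ‖ * ‖Q‖ := l2_opNorm_mul _ _
      _ ≤ 1 * 1 := by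
        rw [l2_opNorm_transpose]
        gcongr
        exacts [l2_opNorm_le_one_of_transpose_mul_self_eq_one hP,
          l2_opNorm_le_one_of_transpose_mul_self_eq_one hQ]
      _ = 1 := one_mul 1
  have hsplit : B * Q = B * P * (Pᵀ * Q) + B * ((1 - P * Pᵀ) * Q) := by
    simp only [Matrix.sub_mul, Matrix.one_mul, Matrix.mul_sub, Matrix.mul_assoc, add_sub_cancel]
  calc ‖B * Q‖ ≤ ‖B * P * (Pᵀ * Q)‖ + ‖B * ((1 - P * Pᵀ) * Q)‖ := hsplit ▸ norm_add_le _ _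
    _ ≤ ‖B * P‖ * ‖Pᵀ * Q‖ + ‖B‖ * ‖(1 - P * Pᵀ) * Q‖ :=
      add_le_add (l2_opNorm_mul _ _) (l2_opNorm_mul _ _)
    _ ≤ ‖B * P‖ + ‖B‖ * ‖(1 - P * Pᵀ) * Q‖ := by
      gcongr
      exact mul_le_of_le_one_right (norm_nonneg _) hPQ

end OrthonormalColumns

end Matrix

section selMat

variable {n : ℕ} (M : Finset (Fin n))

lemma selMat_transpose_mul {α : Type*} (A : Matrix (Fin n) α ℝ) :
    (selMat M)ᵀ * A = A.submatrix (↑) id := by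
  ext i j
  simp [selMat, Matrix.mul_apply]

lemma selMat_transpose_mul_selMat : (selMat M)ᵀ * selMat M = 1 := by
  ext i j
  by_cases h : i = j
  · subst h
    simp [selMat_transpose_mul, selMat]
  · simp [selMat_transpose_mul, selMat, one_apply_ne h, Subtype.coe_ne_coe.mpr (Ne.symm h)]

lemma l2_opNorm_selMat_transpose_mul_le {r : ℕ} (P : Matrix (Fin n) (Fin r) ℝ) {c : ℝ}
    (hc : ∀ i, ∑ j, P i j ^ 2 ≤ c) : ‖(selMat M)ᵀ * P‖ ≤ √(M.card * c) := by
  simpa [selMat_transpose_mul] using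
    l2_opNorm_le_sqrt_card_mul_of_sum_sq_row_le (P.submatrix ((↑) : M → Fin n) id) fun i ↦ hc i

end selMat

theorem gram_inverse_norm_bound
    {n r : ℕ} (μ : ℝ) (P Phat : Matrix (Fin n) (Fin r) ℝ)
    (hP : Pᵀ * P = 1) (hPhat : Phatᵀ * Phat = 1)
    (hinc : ∀ m : Fin n, ∑ j, (P m j) ^ 2 ≤ μ * r / n)
    (M : Finset (Fin n))
    (hsmall : distP Phat P + Real.sqrt ((M.card : ℝ) * μ * r / n) < 1) :
    IsUnit ((selMat M)ᵀ * (1 - Phat * Phatᵀ) * selMat M) ∧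
    specNorm ((selMat M)ᵀ * (1 - Phat * Phatᵀ) * selMat M)⁻¹ ≤
      1 / (1 - (distP Phat P + Real.sqrt ((M.card : ℝ) * μ * r / n)) ^ 2) := by
  set S := selMat M
  set ε := distP Phat P + √((M.card : ℝ) * μ * r / n)
  have hdist : distP Phat P = ‖(1 - Phat * Phatᵀ) * P‖ := rfl
  have hSP : ‖Sᵀ * P‖ ≤ √((M.card : ℝ) * μ * r / n) :=
    (l2_opNorm_selMat_transpose_mul_le M P hinc).trans_eq (by ring_nf)
  have hG : ‖Sᵀ * Phat‖ ≤ ε := calc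
    ‖Sᵀ * Phat‖ ≤ ‖Sᵀ * P‖ + ‖Sᵀ‖ * ‖(1 - P * Pᵀ) * Phat‖ :=
      l2_opNorm_mul_le_add_of_transpose_mul_self_eq_one _ hP hPhat
    _ ≤ √((M.card : ℝ) * μ * r / n) + 1 * distP Phat P := by
      rw [l2_opNorm_one_sub_mul_transpose_mul_comm hP hPhat, l2_opNorm_transpose, ← hdist]
      gcongr
      · exact hdist ▸ norm_nonneg _
      · exact l2_opNorm_le_one_of_transpose_mul_self_eq_one (selMat_transpose_mul_selMat M)
    _ = ε := by ring
  have hgram : Sᵀ * (1 - Phat * Phatᵀ) * S = 1 - (Sᵀ * Phat) * (Sᵀ * Phat)ᵀ := by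
    rw [Matrix.mul_sub, Matrix.mul_one, Matrix.sub_mul, selMat_transpose_mul_selMat,
      transpose_mul, transpose_transpose, Matrix.mul_assoc, Matrix.mul_assoc, Matrix.mul_assoc]
  have hGG : ‖(Sᵀ * Phat) * (Sᵀ * Phat)ᵀ‖ ≤ ε ^ 2 := by
    rw [l2_opNorm_mul_transpose_self, ← sq]
    exact pow_le_pow_left₀ (norm_nonneg _) hG 2
  have hε : ε ^ 2 < 1 :=
    pow_lt_one₀ (add_nonneg (hdist ▸ norm_nonneg _) (Real.sqrt_nonneg _)) hsmall two_ne_zero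
  obtain ⟨hunit, hinv⟩ := isUnit_one_sub_and_l2_opNorm_inv_le (hGG.trans_lt hε)
  rw [hgram]
  exact ⟨hunit, hinv.trans (by rw [one_div]; gcongr)⟩
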